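/- Let Σ be a signed graph on vertex set {1,…,n} whose quadratic form q_Σ is positive definite (q_Σ(x) > 0 for all nonzero x ∈ ℤ^n). Then every full (chordless) cycle of Σ contains an odd number of dotted edges. -/

import Mathlib

/-!
If a full cycle `c₀ c₁ … c_{L-1}` had an even number of dotted edges, the product of the
negated edge signs `-a_{c_k c_{k+1}}` around it would be `1`, so one could choose signs
`ε_k = ±1` on its vertices with `a_{c_k c_{k+1}} ε_k ε_{k+1} = -1` on every edge, i.e. switch
the cycle to an all-solid one. The vector `x` with `x_{c_k} = ε_k`, zero off the cycle, then
has `q(x) = L - L = 0`, because the cycle has no chords: the only off-diagonal terms of `q(x)`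
are its `L` edges, each contributing `-1`. This contradicts positive definiteness.
-/

open Finset

/-- A sign matrix encodes a signed graph on the vertex set `Fin n`:
`a i j = 1` if `{i,j}` is a dotted edge, `a i j = -1` if `{i,j}` is a solid edge,
and `a i j = 0` if there is no edge between `i` and `j`. -/
def IsSignMatrix {n : ℕ} (a : Fin n → Fin n → ℤ) : Prop :=
  (∀ i j, a j i = a i j) ∧ (∀ i, a i i = 0) ∧
    (∀ i j, a i j = -1 ∨ a i j = 0 ∨ a i j = 1)

def sgnForm {n : ℕ} (a : Fin n → Fin n → ℤ) (x : Fin n → ℤ) : ℤ :=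
  (∑ i, x i ^ 2) + ∑ i, ∑ j, if i < j then a i j * (x i * x j) else 0

/-- `c` is a full (chordless) cycle of the signed graph `a`: a cycle of length
`m + 3 ≥ 3` in the underlying graph whose vertex set induces no further edges. -/
def IsFullCycle {n m : ℕ} (a : Fin n → Fin n → ℤ) (c : Fin (m + 3) → Fin n) : Prop :=
  Function.Injective c ∧
    (∀ k, a (c k) (c (k + 1)) ≠ 0) ∧
    (∀ k l : Fin (m + 3), a (c k) (c l) ≠ 0 → l = k + 1 ∨ k = l + 1)

def dottedCount {n m : ℕ} (a : Fin n → Fin n → ℤ) (c : Fin (m + 3) → Fin n) : ℕ :=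
  (Finset.univ.filter fun k : Fin (m + 3) => a (c k) (c (k + 1)) = 1).card

open Function

theorem Fin.partialProd_last {M : Type*} [CommMonoid M] {n : ℕ} (f : Fin n → M) :
    Fin.partialProd f (Fin.last n) = ∏ i, f i := by
  simp [Fin.partialProd, List.take_of_length_le, List.prod_ofFn]

theorem Fin.partialProd_sq_eq_one {R : Type*} [CommMonoid R] {n : ℕ} {f : Fin n → R}
    (hf : ∀ k, f k ^ 2 = 1) (j : Fin (n + 1)) : Fin.partialProd f j ^ 2 = 1 := by
  induction j using Fin.induction with
  | zero => simp
  | succ j ih => rw [Fin.partialProd_succ, mul_pow, ih, hf, one_mul]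

theorem exists_switching_to_solid_of_prod_neg_eq_one {R : Type*} [CommRing R] {M : ℕ}
    (s : Fin (M + 1) → R) (hs : ∀ k, s k ^ 2 = 1) (hprod : ∏ k, -s k = 1) :
    ∃ ε : Fin (M + 1) → R, (∀ k, ε k ^ 2 = 1) ∧ ∀ k, s k * ε k * ε (k + 1) = -1 := by
  -- `ε` is the partial product of the `-s k`; `hprod` is what makes it close up at `k = last`.
  let p := Fin.partialProd fun k => -s k
  have hp : ∀ j, p j ^ 2 = 1 := Fin.partialProd_sq_eq_one fun k => by rw [neg_sq, hs]
  have hnext : ∀ k : Fin (M + 1), p (k + 1).castSucc = p k.succ := by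
    intro k
    by_cases hk : k = Fin.last M
    · subst hk
      rw [Fin.last_add_one, Fin.castSucc_zero, Fin.succ_last]
      exact (Fin.partialProd_zero _).trans (hprod.symm.trans (Fin.partialProd_last _).symm)
    · congr 1
      ext
      simp [Fin.val_add_one_of_lt (Fin.lt_last_iff_ne_last.mpr hk)]
  refine ⟨fun k => p k.castSucc, fun k => hp _, fun k => ?_⟩
  simp only [hnext, p, Fin.partialProd_succ]
  linear_combination (-p k.castSucc ^ 2) * hs k - hp k.castSucc

theorem Fintype.sum_mul_extend_zero {ι κ R : Type*} [Fintype ι] [Fintype κ]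
    [NonUnitalNonAssocSemiring R] {c : ι → κ} (hc : Injective c) (ε : ι → R) (B : κ → R) :
    ∑ i, B i * extend c ε 0 i = ∑ k, B (c k) * ε k :=
  (Fintype.sum_of_injective c hc _ _
    (fun i hi => by rw [extend_apply' _ _ _ fun ⟨k, hk⟩ => hi ⟨k, hk⟩, Pi.zero_apply, mul_zero])
    (fun k => by rw [hc.extend_apply])).symm

section SignedGraph

variable {n : ℕ} {a : Fin n → Fin n → ℤ}

theorem two_mul_sgnForm (hsymm : ∀ i j, a j i = a i j) (hdiag : ∀ i, a i i = 0)
    (x : Fin n → ℤ) : 2 * sgnForm a x = 2 * ∑ i, x i ^ 2 + ∑ i, ∑ j, a i j * (x i * x j) := by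
  let f i j := a i j * (x i * x j)
  have hsplit : ∀ i j, f i j = (if i < j then f i j else 0) + (if j < i then f j i else 0) := by
    intro i j
    rcases lt_trichotomy i j with h | rfl | h
    · simp [h, h.not_gt]
    · simp [f, hdiag]
    · simp only [h, h.not_gt, if_true, if_false, zero_add, f, hsymm i j]
      ring
  have hswap : ∑ i, ∑ j, (if j < i then f j i else 0) = ∑ i, ∑ j, (if i < j then f i j else 0) :=
    sum_comm
  have hcross : ∑ i, ∑ j, f i j = 2 * ∑ i, ∑ j, (if i < j then f i j else 0) := by
    calc ∑ i, ∑ j, f i j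
        = ∑ i, ∑ j, ((if i < j then f i j else 0) + (if j < i then f j i else 0)) :=
          sum_congr rfl fun i _ => sum_congr rfl fun j _ => hsplit i j
      _ = 2 * ∑ i, ∑ j, (if i < j then f i j else 0) := by
          simp only [sum_add_distrib, hswap]
          ring
  rw [sgnForm, hcross]
  ring

open Fin.CommRing in
theorem Fin.add_one_ne_sub_one {m : ℕ} (k : Fin (m + 3)) : k + 1 ≠ k - 1 := by
  intro h
  have h2 : (2 : Fin (m + 3)) = 0 := by linear_combination h
  simp [Fin.ext_iff, Nat.mod_eq_of_lt (show 2 < m + 3 by omega)] at h2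

variable {m : ℕ} {c : Fin (m + 3) → Fin n}

theorem IsFullCycle.edge_eq_one_or_neg_one (ha : IsSignMatrix a) (hc : IsFullCycle a c)
    (k : Fin (m + 3)) : a (c k) (c (k + 1)) = 1 ∨ a (c k) (c (k + 1)) = -1 := by
  rcases ha.2.2 (c k) (c (k + 1)) with h | h | h
  exacts [Or.inr h, absurd h (hc.2.1 k), Or.inl h]

theorem prod_neg_edge_eq_neg_one_pow_dottedCount
    (hedge : ∀ k, a (c k) (c (k + 1)) = 1 ∨ a (c k) (c (k + 1)) = -1) :
    ∏ k, -a (c k) (c (k + 1)) = (-1) ^ dottedCount a c := by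
  have hsign : ∀ k, -a (c k) (c (k + 1)) = if a (c k) (c (k + 1)) = 1 then -1 else 1 := by
    intro k
    rcases hedge k with h | h <;> simp [h]
  rw [prod_congr rfl fun k _ => hsign k, prod_ite, prod_const_one, mul_one,
    prod_const, dottedCount]

theorem IsFullCycle.sum_adj_mul (hc : IsFullCycle a c) (k : Fin (m + 3)) (f : Fin (m + 3) → ℤ) :
    ∑ l, a (c k) (c l) * f l
      = a (c k) (c (k + 1)) * f (k + 1) + a (c k) (c (k - 1)) * f (k - 1) := by
  rw [← sum_pair (f := fun l => a (c k) (c l) * f l) (Fin.add_one_ne_sub_one k)]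
  refine (sum_subset (subset_univ _) fun l _ hl => ?_).symm
  have hzero : a (c k) (c l) = 0 := by
    by_contra hkl
    rcases hc.2.2 k l hkl with rfl | h
    · simp at hl
    · simp [h] at hl
  rw [hzero, zero_mul]

theorem sgnForm_extend_eq_zero (hsymm : ∀ i j, a j i = a i j) (hdiag : ∀ i, a i i = 0)
    (hc : IsFullCycle a c) {ε : Fin (m + 3) → ℤ} (hε : ∀ k, ε k ^ 2 = 1)
    (hsolid : ∀ k, a (c k) (c (k + 1)) * ε k * ε (k + 1) = -1) :
    sgnForm a (extend c ε 0) = 0 := by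
  set x := extend c ε 0
  have hsq : ∑ i, x i ^ 2 = m + 3 := by
    calc ∑ i, x i ^ 2 = ∑ i, x i * x i := by simp only [sq]
      _ = ∑ k, ε k ^ 2 := by rw [Fintype.sum_mul_extend_zero hc.1]; simp [x, hc.1.extend_apply, sq]
      _ = m + 3 := by simp [hε]
  have hcross : ∑ i, ∑ j, a i j * (x i * x j) = -2 * (m + 3) := by
    calc ∑ i, ∑ j, a i j * (x i * x j) = ∑ i, (∑ j, a i j * x j) * x i := by
          refine sum_congr rfl fun i _ => ?_
          rw [sum_mul]
          exact sum_congr rfl fun j _ => by ring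
      _ = ∑ k, (∑ l, a (c k) (c l) * ε l) * ε k := by
          simp only [x, Fintype.sum_mul_extend_zero hc.1]
      _ = ∑ k : Fin (m + 3), -2 := by
          refine sum_congr rfl fun k _ => ?_
          have hprev := hsolid (k - 1)
          rw [sub_add_cancel, hsymm] at hprev
          rw [hc.sum_adj_mul]
          linear_combination hsolid k + hprev
      _ = -2 * (m + 3) := by simp [mul_comm]
  linarith [two_mul_sgnForm hsymm hdiag x]

end SignedGraph

/-- if the quadratic form of a signed graph is positive definite, then every
full (chordless) cycle contains an odd number of dotted edges. -/
theorem odd_dotted_of_posDef {n m : ℕ} (a : Fin n → Fin n → ℤ)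
    (ha : IsSignMatrix a)
    (hpd : ∀ x : Fin n → ℤ, x ≠ 0 → 0 < sgnForm a x)
    (c : Fin (m + 3) → Fin n) (hc : IsFullCycle a c) :
    Odd (dottedCount a c) := by
  by_contra heven
  have hedge := hc.edge_eq_one_or_neg_one ha
  obtain ⟨ε, hε, hsolid⟩ := exists_switching_to_solid_of_prod_neg_eq_one
    (fun k => a (c k) (c (k + 1))) (fun k => by rcases hedge k with h | h <;> simp [h])
    (by rw [prod_neg_edge_eq_neg_one_pow_dottedCount hedge,
      (Nat.not_odd_iff_even.mp heven).neg_one_pow])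
  have hx : extend c ε 0 ≠ 0 := fun h => by
    have h0 := congrFun h (c 0)
    rw [hc.1.extend_apply] at h0
    simpa [h0] using hε 0
  exact (hpd _ hx).ne' (sgnForm_extend_eq_zero ha.1 ha.2.1 hc hε hsolid)
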